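/- arXiv:1207.4805 — 7 statements merged into one kernel-verified Lean document; each statement's English description precedes it below -/
import Mathlib

section
/- For a maximally non-commutative factor system ω of a finite abelian group G, any irreducible projective unitary representation of G with factor system ω has dimension equal to the square root of |G|. -/
/-!
The matrices `V g` are orthogonal for the trace form `⟨A, B⟩ = tr (A⋆ B)`: if `g ≠ 1`, some
`V h` fails to commute with `V g`, and conjugation by `V h` multiplies `V g` by a phase `≠ 1`,
so `tr (V g) = 0`. Hence the `V g` are linearly independent and `|G| ≤ n²`. Conversely, by
Schur's lemma the average `∑ h, V h X (V h)⋆` is the scalar `|G| / n · tr X`; read entrywise,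
these are the orthogonality relations of the matrix coefficients, equivalently the inversion
formula `∑ h, tr ((V h)⋆ A) • V h = |G| / n • A`. So the `V g` span all matrices and
`n² ≤ |G|`.
-/

open Matrix

def Matrix.IsIrreducibleFamily {K ι G : Type*} [CommSemiring K] [Fintype ι] [DecidableEq ι]
    (V : G → Matrix ι ι K) : Prop :=
  ∀ p : Submodule K (ι → K), (∀ g, p.map (toLin' (V g)) ≤ p) → p = ⊥ ∨ p = ⊤

def IsMaximallyNonCommutative {G : Type*} [One G] (ω : G → G → ℂ) : Prop :=
  ∀ g, (∀ h, ω g h = ω h g) → g = 1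

structure IsProjectiveUnitaryRep {G ι : Type*} [Mul G] [Fintype ι] [DecidableEq ι]
    (ω : G → G → ℂ) (V : G → Matrix ι ι ℂ) : Prop where
  mem_unitaryGroup : ∀ g, V g ∈ unitaryGroup ι ℂ
  norm_factor : ∀ g h, ‖ω g h‖ = 1
  mul : ∀ g h, V g * V h = ω g h • V (g * h)

theorem Matrix.IsIrreducibleFamily.eq_smul_one_of_forall_commute {K ι G : Type*} [Field K]
    [IsAlgClosed K] [Fintype ι] [DecidableEq ι] [Nonempty ι] {V : G → Matrix ι ι K}
    (hirr : IsIrreducibleFamily V) {B : Matrix ι ι K} (hB : ∀ g, Commute (V g) B) :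
    ∃ μ : K, B = μ • 1 := by
  obtain ⟨μ, hμ⟩ := Module.End.exists_eigenvalue (toLinAlgEquiv' B)
  have hinv (g : G) : (Module.End.eigenspace (toLinAlgEquiv' B) μ).map (toLin' (V g)) ≤
      Module.End.eigenspace (toLinAlgEquiv' B) μ :=
    Submodule.map_le_iff_le_comap.mpr fun _ hx =>
      Module.End.mapsTo_genEigenspace_of_comm ((hB g).symm.map toLinAlgEquiv') μ 1 hx
  refine ⟨μ, toLin'.injective (LinearMap.ext fun v => ?_)⟩
  have hv : v ∈ Module.End.eigenspace (toLinAlgEquiv' B) μ := by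
    rw [(hirr _ hinv).resolve_left hμ]; trivial
  simpa using Module.End.mem_eigenspace_iff.mp hv

namespace IsProjectiveUnitaryRep

variable {G ι : Type*} [Fintype ι] [DecidableEq ι] {ω : G → G → ℂ}
  {V : G → Matrix ι ι ℂ}

section Mul

variable [Mul G]

theorem star_mul_self (hV : IsProjectiveUnitaryRep ω V) (g : G) : star (V g) * V g = 1 :=
  mem_unitaryGroup_iff'.mp (hV.mem_unitaryGroup g)

theorem mul_star_self (hV : IsProjectiveUnitaryRep ω V) (g : G) : V g * star (V g) = 1 :=
  mem_unitaryGroup_iff.mp (hV.mem_unitaryGroup g)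

theorem factor_ne_zero (hV : IsProjectiveUnitaryRep ω V) (g h : G) : ω g h ≠ 0 :=
  norm_ne_zero_iff.mp (by simp [hV.norm_factor])

theorem conj_conj (hV : IsProjectiveUnitaryRep ω V) (g h : G) (X : Matrix ι ι ℂ) :
    V g * (V h * X * star (V h)) * star (V g) = V (g * h) * X * star (V (g * h)) := by
  have hωω : ω g h * star (ω g h) = 1 := by
    rw [Complex.star_def, Complex.mul_conj', hV.norm_factor]; simp
  calc V g * (V h * X * star (V h)) * star (V g) = V g * V h * X * star (V g * V h) := by
        simp only [star_mul, mul_assoc]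
    _ = V (g * h) * X * star (V (g * h)) := by
        rw [hV.mul, star_smul, smul_mul_assoc, smul_mul_assoc, mul_smul_comm, smul_smul, hωω,
          one_smul]

end Mul

section Group

variable [Group G] [Fintype G] [Nonempty ι]

theorem sum_conj_eq_smul_one
    (hV : IsProjectiveUnitaryRep ω V) (hirr : IsIrreducibleFamily V) (X : Matrix ι ι ℂ) :
    ∑ h, V h * X * star (V h) = ((Fintype.card G : ℂ) / Fintype.card ι * trace X) • 1 := by
  set T := ∑ h, V h * X * star (V h)
  have hconj (g : G) : V g * T * star (V g) = T := by
    simp only [T, Finset.mul_sum, Finset.sum_mul, hV.conj_conj]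
    exact Equiv.sum_comp (Equiv.mulLeft g) fun h => V h * X * star (V h)
  have hcomm (g : G) : Commute (V g) T := by
    calc V g * T = V g * T * star (V g) * V g := by
          rw [mul_assoc _ (star _), hV.star_mul_self, mul_one]
      _ = T * V g := by rw [hconj]
  obtain ⟨μ, hμ⟩ := hirr.eq_smul_one_of_forall_commute hcomm
  have htrace : trace T = Fintype.card G * trace X := by
    simp [T, trace_sum, trace_mul_cycle _ X, hV.star_mul_self]
  rw [hμ, trace_smul, trace_one, smul_eq_mul] at htrace
  have hι : (Fintype.card ι : ℂ) ≠ 0 := Nat.cast_ne_zero.mpr Fintype.card_ne_zero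
  rw [hμ, div_mul_eq_mul_div, ← htrace, mul_div_cancel_right₀ _ hι]

theorem sum_apply_mul_star_apply
    (hV : IsProjectiveUnitaryRep ω V) (hirr : IsIrreducibleFamily V) (i j k l : ι) :
    ∑ h, V h i j * star (V h k l) =
      if i = k ∧ j = l then (Fintype.card G : ℂ) / Fintype.card ι else 0 := by
  simpa [Matrix.sum_apply, mul_apply, single_apply, one_apply, Matrix.smul_apply, ite_and, trace,
    eq_comm] using congr_fun₂ (hV.sum_conj_eq_smul_one hirr (single j l 1)) i k

theorem sum_trace_star_mul_smul
    (hV : IsProjectiveUnitaryRep ω V) (hirr : IsIrreducibleFamily V) (A : Matrix ι ι ℂ) :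
    ∑ h, trace (star (V h) * A) • V h = ((Fintype.card G : ℂ) / Fintype.card ι) • A := by
  ext i j
  calc (∑ h, trace (star (V h) * A) • V h) i j
      = ∑ l, ∑ k, A k l * ∑ h, V h i j * star (V h k l) := by
        simp only [Matrix.sum_apply, Matrix.smul_apply, trace, diag, mul_apply, star_apply,
          smul_eq_mul, Finset.sum_mul, Finset.mul_sum]
        rw [Finset.sum_comm]
        refine Finset.sum_congr rfl fun l _ => ?_
        rw [Finset.sum_comm]
        exact Finset.sum_congr rfl fun k _ => Finset.sum_congr rfl fun h _ => by ring
    _ = (((Fintype.card G : ℂ) / Fintype.card ι) • A) i j := by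
        simp only [hV.sum_apply_mul_star_apply hirr]
        simp [ite_and, mul_comm]

theorem span_range_eq_top
    (hV : IsProjectiveUnitaryRep ω V) (hirr : IsIrreducibleFamily V) :
    Submodule.span ℂ (Set.range V) = ⊤ := by
  refine Submodule.eq_top_iff'.mpr fun A => (Submodule.mem_span_range_iff_exists_fun ℂ).mpr
    ⟨fun h => (Fintype.card ι : ℂ) / Fintype.card G * trace (star (V h) * A), ?_⟩
  have hG : (Fintype.card G : ℂ) ≠ 0 := Nat.cast_ne_zero.mpr Fintype.card_ne_zero
  have hι : (Fintype.card ι : ℂ) ≠ 0 := Nat.cast_ne_zero.mpr Fintype.card_ne_zero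
  simp only [← smul_smul, ← Finset.smul_sum, hV.sum_trace_star_mul_smul hirr]
  rw [smul_smul, div_mul_div_cancel₀ hG, div_self hι, one_smul]

end Group

section CommGroup

variable [CommGroup G]

theorem trace_eq_zero_of_ne_one (hV : IsProjectiveUnitaryRep ω V)
    (hmnc : IsMaximallyNonCommutative ω) {g : G} (hg : g ≠ 1) :
    trace (V g) = 0 := by
  obtain ⟨h, hgh⟩ : ∃ h, ω g h ≠ ω h g := by
    by_contra! hcomm
    exact hg (hmnc g hcomm)
  have hswap : V h * V g = (ω h g / ω g h) • (V g * V h) := by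
    rw [hV.mul, hV.mul, smul_smul, div_mul_cancel₀ _ (hV.factor_ne_zero g h), mul_comm]
  have hphase : ω h g / ω g h ≠ 1 := fun h1 =>
    hgh ((div_eq_one_iff_eq (hV.factor_ne_zero g h)).mp h1).symm
  have htrace : ω h g / ω g h * trace (V g) = trace (V g) := by
    calc ω h g / ω g h * trace (V g) = trace (V h * V g * star (V h)) := by
          rw [hswap, smul_mul_assoc, trace_smul, mul_assoc,
            hV.mul_star_self, mul_one, smul_eq_mul]
      _ = trace (V g) := by rw [trace_mul_cycle, hV.star_mul_self, one_mul]
  exact (mul_left_eq_self₀.mp htrace).resolve_left hphase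

theorem trace_star_mul_of_ne (hV : IsProjectiveUnitaryRep ω V)
    (hmnc : IsMaximallyNonCommutative ω) {g h : G} (hgh : g ≠ h) :
    trace (star (V g) * V h) = 0 := by
  have hgh' : g⁻¹ * h ≠ 1 := fun h1 => hgh (inv_mul_eq_one.mp h1)
  have : ω g (g⁻¹ * h) * trace (star (V g) * V h) = 0 :=
    calc ω g (g⁻¹ * h) * trace (star (V g) * V h)
        = trace (star (V g) * (V g * V (g⁻¹ * h))) := by
          rw [hV.mul, mul_inv_cancel_left, mul_smul_comm, trace_smul, smul_eq_mul]
      _ = trace (V (g⁻¹ * h)) := by rw [← mul_assoc, hV.star_mul_self, one_mul]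
      _ = 0 := hV.trace_eq_zero_of_ne_one hmnc hgh'
  exact (mul_eq_zero.mp this).resolve_left (hV.factor_ne_zero _ _)

theorem linearIndependent [Fintype G] [Nonempty ι] (hV : IsProjectiveUnitaryRep ω V)
    (hmnc : IsMaximallyNonCommutative ω) : LinearIndependent ℂ V := by
  rw [Fintype.linearIndependent_iff]
  intro f hf g
  have := congrArg (fun A => trace (star (V g) * A)) hf
  rw [Finset.mul_sum, trace_sum, Finset.sum_eq_single g (fun h _ hh => by
    rw [mul_smul_comm, trace_smul, hV.trace_star_mul_of_ne hmnc (Ne.symm hh), smul_zero])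
    (by simp)] at this
  simpa [hV.star_mul_self] using this

end CommGroup
end IsProjectiveUnitaryRep

theorem dim_irreducible_of_maximally_non_commutative_general
    {G : Type*} [CommGroup G] [Fintype G] {n : ℕ} (hn : 0 < n)
    (ω : G → G → ℂ)
    (hω : ∀ g h, ‖ω g h‖ = 1)
    (hmnc : ∀ g, (∀ h, ω g h = ω h g) → g = 1)
    (V : G → Matrix (Fin n) (Fin n) ℂ)
    (hVunit : ∀ g, V g ∈ Matrix.unitaryGroup (Fin n) ℂ)
    (hVproj : ∀ g h, V g * V h = ω g h • V (g * h))
    (hirr : ∀ p : Submodule ℂ (Fin n → ℂ),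
      (∀ g, p.map (Matrix.toLin' (V g)) ≤ p) → p = ⊥ ∨ p = ⊤) :
    n * n = Fintype.card G := by
  have : Nonempty (Fin n) := Fin.pos_iff_nonempty.mp hn
  have hV : IsProjectiveUnitaryRep ω V := ⟨hVunit, hω, hVproj⟩
  let b : Module.Basis G ℂ (Matrix (Fin n) (Fin n) ℂ) :=
    .mk (hV.linearIndependent hmnc) (hV.span_range_eq_top hirr).ge
  simpa using (Module.finrank_matrix ℂ ℂ (Fin n) (Fin n)).symm.trans
    (Module.finrank_eq_card_basis b)

/-- For a maximally non-commutative factor system `ω` of a finite abelian group `G`,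
any irreducible projective unitary representation of `G` with factor system `ω` has
dimension equal to `√|G|`, i.e. its dimension `n` satisfies `n * n = |G|`. -/
theorem dim_irreducible_of_maximally_non_commutative
    {G : Type*} [CommGroup G] [Fintype G] {n : ℕ} (hn : 0 < n)
    (ω : G → G → ℂ)
    (hcocycle : ∀ g h k, ω g h * ω (g * h) k = ω h k * ω g (h * k))
    (hω : ∀ g h, ‖ω g h‖ = 1)
    (hmnc : ∀ g, (∀ h, ω g h = ω h g) → g = 1)
    (V : G → Matrix (Fin n) (Fin n) ℂ)
    (hVunit : ∀ g, V g ∈ Matrix.unitaryGroup (Fin n) ℂ)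
    (hVproj : ∀ g h, V g * V h = ω g h • V (g * h))
    (hirr : ∀ p : Submodule ℂ (Fin n → ℂ),
      (∀ g, p.map (Matrix.toLin' (V g)) ≤ p) → p = ⊥ ∨ p = ⊤) :
    n * n = Fintype.card G :=
  dim_irreducible_of_maximally_non_commutative_general hn ω hω hmnc V hVunit hVproj hirr
end

section
/- For a maximally non-commutative factor system ω of a finite abelian group G, there is a unique irreducible projective unitary representation with factor system ω, up to unitary equivalence. -/
/-!
Maximal non-commutativity makes the character of `V` vanish off the identity: if
`ω g h ≠ ω h g`, conjugation by `V h` multiplies `V g` by `ω h g / ω g h ≠ 1`, so `tr (V g) = 0`.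
Hence `∑ g, tr (V' g) * conj (tr (V g)) = m * n ≠ 0`, and averaging `A ↦ ∑ g, V' g * A * (V g)ᴴ`
over a suitable matrix unit `A` gives a nonzero intertwiner `T`. By Schur's lemma `Tᴴ * T` is a
positive scalar, and the corresponding rescaling of `T` is the required unitary.
-/

open Matrix

namespace Matrix

variable {ι κ R : Type*} [Fintype ι] [DecidableEq ι]

theorem trace_eq_zero_of_mul_eq_smul_mul [Field R] {A B : Matrix ι ι R} (hA : IsUnit A) {c : R}
    (hc : c ≠ 1) (h : A * B = c • (B * A)) : B.trace = 0 := by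
  obtain ⟨u, rfl⟩ := hA
  have hconj : trace B = c * trace B := by
    calc trace B = trace (↑u⁻¹ * (↑u * B)) := by rw [← mul_assoc, Units.inv_mul, one_mul]
      _ = c * trace (↑u⁻¹ * B * ↑u) := by
          rw [h, Matrix.mul_smul, trace_smul, mul_assoc, smul_eq_mul]
      _ = c * trace B := by rw [trace_units_conj']
  have : (1 - c) * trace B = 0 := by linear_combination hconj
  exact (mul_eq_zero.mp this).resolve_left (sub_ne_zero.mpr hc.symm)

theorem eq_smul_one_of_mul_self_eq_smul [CommRing R] {A : Matrix ι ι R} (hA : IsUnit A) {c : R}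
    (h : A * A = c • A) : A = c • 1 :=
  hA.mul_left_cancel (by rw [h, Matrix.mul_smul, mul_one])

open ComplexOrder in
theorem exists_smul_conjTranspose_mul_self_eq_one [Fintype κ] {T : Matrix κ ι ℂ} (hT : T ≠ 0)
    {μ : ℂ} (hμ : Tᴴ * T = μ • 1) : ∃ c : ℂ, (c • T)ᴴ * (c • T) = 1 := by
  obtain ⟨i, -⟩ : ∃ i, ∃ k, T k i ≠ 0 := by
    by_contra! h
    exact hT (ext fun k i => h i k)
  have hμ0 : μ ≠ 0 := by
    rintro rfl
    rw [zero_smul, conjTranspose_mul_self_eq_zero] at hμ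
    exact hT hμ
  have hμ_nonneg : 0 ≤ μ := by
    simpa [hμ] using (posSemidef_conjTranspose_mul_self T).diag_nonneg (i := i)
  obtain ⟨r, hr, rfl⟩ := RCLike.pos_iff_exists_ofReal.mp (lt_of_le_of_ne hμ_nonneg hμ0.symm)
  refine ⟨((√r)⁻¹ : ℝ), ?_⟩
  rw [conjTranspose_smul, Matrix.smul_mul, Matrix.mul_smul, smul_smul, hμ, smul_smul,
    Complex.star_def, Complex.conj_ofReal]
  norm_cast
  rw [← sq, inv_pow, Real.sq_sqrt hr.le]
  simp [hr.ne']

theorem mul_left_cancel_of_ker_eq_bot [CommRing R] {ν : Type*} [Fintype ν]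
    [DecidableEq ν] {A : Matrix κ ι R} (hA : LinearMap.ker (toLin' A) = ⊥) {B C : Matrix ι ν R}
    (h : A * B = A * C) : B = C := by
  refine toLin'.injective (LinearMap.ext fun x => LinearMap.ker_eq_bot.mp hA ?_)
  simpa only [toLin'_mul, LinearMap.comp_apply] using LinearMap.congr_fun (congrArg toLin' h) x

end Matrix

namespace ProjectiveRep

variable {G ι κ ν : Type*} [Fintype ι] [Fintype κ] [Fintype ν]

def IsIrreducible [DecidableEq ι] (V : G → Matrix ι ι ℂ) : Prop :=
  ∀ p : Submodule ℂ (ι → ℂ), (∀ g, p.map (toLin' (V g)) ≤ p) → p = ⊥ ∨ p = ⊤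

def IsMaximallyNonCommutative [One G] (ω : G → G → ℂ) : Prop :=
  ∀ g, (∀ h, ω g h = ω h g) → g = 1

def IsIntertwiner (V : G → Matrix ι ι ℂ) (V' : G → Matrix κ κ ℂ) (T : Matrix κ ι ℂ) : Prop :=
  ∀ g, V' g * T = T * V g

namespace IsIntertwiner

variable {V : G → Matrix ι ι ℂ} {V' : G → Matrix κ κ ℂ} {V'' : G → Matrix ν ν ℂ}
  {T : Matrix κ ι ℂ}

theorem mul {S : Matrix ν κ ℂ} (hT : IsIntertwiner V V' T) (hS : IsIntertwiner V' V'' S) :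
    IsIntertwiner V V'' (S * T) := fun g => by
  rw [← Matrix.mul_assoc, hS g, Matrix.mul_assoc, hT g, Matrix.mul_assoc]

theorem smul (hT : IsIntertwiner V V' T) (c : ℂ) : IsIntertwiner V V' (c • T) := fun g => by
  rw [Matrix.mul_smul, hT g, Matrix.smul_mul]

variable [DecidableEq ι]

theorem sub_smul_one {S : Matrix ι ι ℂ} (hS : IsIntertwiner V V S) (c : ℂ) :
    IsIntertwiner V V (S - c • 1) := fun g => by
  rw [Matrix.mul_sub, Matrix.sub_mul, hS g, Matrix.mul_smul, Matrix.smul_mul, mul_one, one_mul]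

theorem map_ker_le (hT : IsIntertwiner V V' T) (g : G) :
    (LinearMap.ker (toLin' T)).map (toLin' (V g)) ≤ LinearMap.ker (toLin' T) := by
  rintro _ ⟨x, hx, rfl⟩
  have hx : T *ᵥ x = 0 := hx
  show T *ᵥ (V g *ᵥ x) = 0
  rw [mulVec_mulVec, ← hT g, ← mulVec_mulVec, hx, mulVec_zero]

theorem ker_eq_bot (hV : IsIrreducible V) (hT : IsIntertwiner V V' T) (hT0 : T ≠ 0) :
    LinearMap.ker (toLin' T) = ⊥ :=
  (hV _ hT.map_ker_le).resolve_right fun h =>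
    hT0 (toLin'.injective (by rw [LinearMap.ker_eq_top.mp h, map_zero]))

theorem exists_eq_smul_one [Nonempty ι] (hV : IsIrreducible V) {S : Matrix ι ι ℂ}
    (hS : IsIntertwiner V V S) : ∃ μ : ℂ, S = μ • 1 := by
  obtain ⟨μ, hμ⟩ := Module.End.exists_eigenvalue (toLin' S)
  obtain ⟨x, hx⟩ := hμ.exists_hasEigenvector
  refine ⟨μ, sub_eq_zero.mp (by_contra fun hne => hx.2 ?_)⟩
  have hx_ker : x ∈ LinearMap.ker (toLin' (S - μ • 1)) := by
    rw [LinearMap.mem_ker, map_sub, LinearMap.sub_apply, hx.apply_eq_smul, _root_.map_smul,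
      toLin'_one, LinearMap.smul_apply, LinearMap.id_apply, sub_self]
  rwa [(hS.sub_smul_one μ).ker_eq_bot hV hne, Submodule.mem_bot] at hx_ker

variable [DecidableEq κ]

theorem conjTranspose (hV : ∀ g, V g ∈ unitaryGroup ι ℂ) (hV' : ∀ g, V' g ∈ unitaryGroup κ ℂ)
    (hT : IsIntertwiner V V' T) : IsIntertwiner V' V Tᴴ := fun g => by
  have h := congrArg Matrix.conjTranspose (hT g)
  rw [conjTranspose_mul, conjTranspose_mul] at h
  calc V g * Tᴴ = V g * (Tᴴ * ((V' g)ᴴ * V' g)) := by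
        rw [← star_eq_conjTranspose, mem_unitaryGroup_iff'.mp (hV' g), Matrix.mul_one]
    _ = V g * (V g)ᴴ * Tᴴ * V' g := by
        rw [← Matrix.mul_assoc Tᴴ, h]; simp only [Matrix.mul_assoc]
    _ = Tᴴ * V' g := by
        rw [← star_eq_conjTranspose, mem_unitaryGroup_iff.mp (hV g), Matrix.one_mul]

end IsIntertwiner

variable {V : G → Matrix ι ι ℂ} {V' : G → Matrix κ κ ℂ}

section MaximallyNonCommutative

variable [DecidableEq ι] [CommGroup G] {ω : G → G → ℂ}

theorem trace_eq_zero_of_ne_one (hω0 : ∀ g h, ω g h ≠ 0)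
    (hmnc : IsMaximallyNonCommutative ω) (hVu : ∀ g, V g ∈ unitaryGroup ι ℂ)
    (hVproj : ∀ g h, V g * V h = ω g h • V (g * h)) {g : G} (hg : g ≠ 1) : (V g).trace = 0 := by
  obtain ⟨h, hne⟩ : ∃ h, ω g h ≠ ω h g := by
    by_contra! hcomm
    exact hg (hmnc g hcomm)
  refine trace_eq_zero_of_mul_eq_smul_mul (Unitary.isUnit_coe (U := ⟨V h, hVu h⟩))
    (c := ω h g / ω g h) (fun h1 => hne ((div_eq_one_iff_eq (hω0 g h)).mp h1).symm) ?_
  rw [hVproj, hVproj, mul_comm h g, smul_smul, div_mul_cancel₀ _ (hω0 g h)]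

theorem apply_one_eq_smul_one (hVu : ∀ g, V g ∈ unitaryGroup ι ℂ)
    (hVproj : ∀ g h, V g * V h = ω g h • V (g * h)) : V 1 = ω 1 1 • 1 :=
  eq_smul_one_of_mul_self_eq_smul (Unitary.isUnit_coe (U := ⟨V 1, hVu 1⟩))
    (by rw [hVproj, one_mul])

theorem sum_trace_mul_star_trace [Fintype G] [DecidableEq κ] (hω : ∀ g h, ‖ω g h‖ = 1)
    (hmnc : IsMaximallyNonCommutative ω)
    (hVu : ∀ g, V g ∈ unitaryGroup ι ℂ) (hV'u : ∀ g, V' g ∈ unitaryGroup κ ℂ)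
    (hVproj : ∀ g h, V g * V h = ω g h • V (g * h))
    (hV'proj : ∀ g h, V' g * V' h = ω g h • V' (g * h)) :
    ∑ g, (V' g).trace * star (V g).trace = Fintype.card κ * Fintype.card ι := by
  have hω0 (g h : G) : ω g h ≠ 0 := fun h0 => by simpa [h0] using hω g h
  rw [Finset.sum_eq_single_of_mem 1 (Finset.mem_univ _) fun g _ hg => by
    rw [trace_eq_zero_of_ne_one hω0 hmnc hVu hVproj hg, star_zero, mul_zero]]
  rw [apply_one_eq_smul_one hVu hVproj, apply_one_eq_smul_one hV'u hV'proj]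
  have hωω : ω 1 1 * star (ω 1 1) = 1 := by
    rw [Complex.star_def, Complex.mul_conj', hω, Complex.ofReal_one, one_pow]
  simp only [trace_smul, trace_one, smul_eq_mul, star_mul', star_natCast]
  linear_combination (Fintype.card κ * Fintype.card ι : ℂ) * hωω

end MaximallyNonCommutative

section Average

variable [Fintype G]

def average (V : G → Matrix ι ι ℂ) (V' : G → Matrix κ κ ℂ) (A : Matrix κ ι ℂ) : Matrix κ ι ℂ :=
  ∑ g, V' g * A * (V g)ᴴ

theorem isIntertwiner_average [DecidableEq ι] [Group G] {ω : G → G → ℂ}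
    (hω : ∀ g h, ‖ω g h‖ = 1) (hVu : ∀ g, V g ∈ unitaryGroup ι ℂ)
    (hVproj : ∀ g h, V g * V h = ω g h • V (g * h))
    (hV'proj : ∀ g h, V' g * V' h = ω g h • V' (g * h)) (A : Matrix κ ι ℂ) :
    IsIntertwiner V V' (average V V' A) := fun h => by
  have hconj (g : G) : V' h * (V' g * A * (V g)ᴴ) * (V h)ᴴ = V' (h * g) * A * (V (h * g))ᴴ := by
    have hωω : ω h g * star (ω h g) = 1 := by
      rw [Complex.star_def, Complex.mul_conj', hω, Complex.ofReal_one, one_pow]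
    calc V' h * (V' g * A * (V g)ᴴ) * (V h)ᴴ = V' h * V' g * A * (V h * V g)ᴴ := by
          simp only [conjTranspose_mul, Matrix.mul_assoc]
      _ = V' (h * g) * A * (V (h * g))ᴴ := by
          rw [hV'proj, hVproj, conjTranspose_smul, Matrix.smul_mul, Matrix.smul_mul,
            Matrix.mul_smul, smul_smul, hωω, one_smul]
  have hfix : V' h * average V V' A * (V h)ᴴ = average V V' A := by
    rw [average, Matrix.mul_sum, Matrix.sum_mul]
    simp only [hconj]
    exact Equiv.sum_comp (Equiv.mulLeft h) fun g => V' g * A * (V g)ᴴ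
  calc V' h * average V V' A = V' h * average V V' A * ((V h)ᴴ * V h) := by
        rw [← star_eq_conjTranspose, mem_unitaryGroup_iff'.mp (hVu h), Matrix.mul_one]
    _ = average V V' A * V h := by rw [← Matrix.mul_assoc, hfix]

variable [DecidableEq ι] [DecidableEq κ]

theorem sum_average_single_apply (V : G → Matrix ι ι ℂ) (V' : G → Matrix κ κ ℂ) :
    ∑ i, ∑ j, average V V' (single i j 1) i j = ∑ g, (V' g).trace * star (V g).trace := by
  calc ∑ i, ∑ j, average V V' (single i j 1) i j
        = ∑ i, ∑ j, ∑ g, V' g i i * star (V g j j) := by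
        simp [average, Matrix.sum_apply, mul_apply, single, ite_and]
    _ = ∑ g, ∑ i, ∑ j, V' g i i * star (V g j j) :=
        (Finset.sum_congr rfl fun _ _ => Finset.sum_comm).trans Finset.sum_comm
    _ = ∑ g, (V' g).trace * star (V g).trace := by
        simp only [trace, diag, star_sum, Finset.sum_mul_sum]

theorem exists_average_ne_zero (h : ∑ g, (V' g).trace * star (V g).trace ≠ 0) :
    ∃ A, average V V' A ≠ 0 := by
  by_contra! h0
  rw [← sum_average_single_apply] at h
  simp [h0] at h

end Average

variable [DecidableEq ι] [DecidableEq κ]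

theorem exists_unitary_of_isIntertwiner (hV : IsIrreducible V) (hV' : IsIrreducible V')
    (hVu : ∀ g, V g ∈ unitaryGroup ι ℂ) (hV'u : ∀ g, V' g ∈ unitaryGroup κ ℂ)
    {T : Matrix κ ι ℂ} (hT : IsIntertwiner V V' T) (hT0 : T ≠ 0) :
    ∃ U : Matrix κ ι ℂ, Uᴴ * U = 1 ∧ U * Uᴴ = 1 ∧ ∀ g, V' g = U * V g * Uᴴ := by
  have : Nonempty ι := by
    by_contra h
    rw [not_nonempty_iff] at h
    exact hT0 (Subsingleton.elim _ _)
  obtain ⟨μ, hμ⟩ := (hT.mul (hT.conjTranspose hVu hV'u)).exists_eq_smul_one hV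
  obtain ⟨c, hc⟩ := exists_smul_conjTranspose_mul_self_eq_one hT0 hμ
  have hU := hT.smul c
  -- `(c • T)ᴴ` is a nonzero intertwiner out of the irreducible `V'`, hence injective.
  have hU_adj_ker : LinearMap.ker (toLin' (c • T)ᴴ) = ⊥ :=
    (hU.conjTranspose hVu hV'u).ker_eq_bot hV' fun h =>
      one_ne_zero (by rw [← hc, h, Matrix.zero_mul])
  have hcU : c • T * (c • T)ᴴ = 1 :=
    mul_left_cancel_of_ker_eq_bot hU_adj_ker
      (by rw [← Matrix.mul_assoc, hc, Matrix.one_mul, Matrix.mul_one])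
  refine ⟨c • T, hc, hcU, fun g => ?_⟩
  rw [← hU g, Matrix.mul_assoc, hcU, Matrix.mul_one]

end ProjectiveRep

theorem unique_irreducible_of_maximally_non_commutative_general
    {G : Type*} [CommGroup G] [Fintype G] {n m : ℕ} (hn : 0 < n) (hm : 0 < m)
    (ω : G → G → ℂ)
    (hω : ∀ g h, ‖ω g h‖ = 1)
    (hmnc : ∀ g, (∀ h, ω g h = ω h g) → g = 1)
    (V : G → Matrix (Fin n) (Fin n) ℂ) (V' : G → Matrix (Fin m) (Fin m) ℂ)
    (hVunit : ∀ g, V g ∈ Matrix.unitaryGroup (Fin n) ℂ)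
    (hV'unit : ∀ g, V' g ∈ Matrix.unitaryGroup (Fin m) ℂ)
    (hVproj : ∀ g h, V g * V h = ω g h • V (g * h))
    (hV'proj : ∀ g h, V' g * V' h = ω g h • V' (g * h))
    (hVirr : ∀ p : Submodule ℂ (Fin n → ℂ),
      (∀ g, p.map (Matrix.toLin' (V g)) ≤ p) → p = ⊥ ∨ p = ⊤)
    (hV'irr : ∀ p : Submodule ℂ (Fin m → ℂ),
      (∀ g, p.map (Matrix.toLin' (V' g)) ≤ p) → p = ⊥ ∨ p = ⊤) :
    ∃ U : Matrix (Fin m) (Fin n) ℂ,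
      Uᴴ * U = 1 ∧ U * Uᴴ = 1 ∧ ∀ g, V' g = U * V g * Uᴴ := by
  have hchar := ProjectiveRep.sum_trace_mul_star_trace hω hmnc hVunit hV'unit hVproj hV'proj
  obtain ⟨A, hA⟩ := ProjectiveRep.exists_average_ne_zero (V := V) (V' := V') (by
    rw [hchar, Fintype.card_fin, Fintype.card_fin]
    exact mul_ne_zero (Nat.cast_ne_zero.mpr hm.ne') (Nat.cast_ne_zero.mpr hn.ne'))
  exact ProjectiveRep.exists_unitary_of_isIntertwiner hVirr hV'irr hVunit hV'unit
    (ProjectiveRep.isIntertwiner_average hω hVunit hVproj hV'proj A) hA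

/-- For a maximally non-commutative factor system `ω` of a finite abelian group `G`,
the irreducible projective unitary representation with factor system `ω` is unique
up to unitary equivalence. -/
theorem unique_irreducible_of_maximally_non_commutative
    {G : Type*} [CommGroup G] [Fintype G] {n m : ℕ} (hn : 0 < n) (hm : 0 < m)
    (ω : G → G → ℂ)
    (hcocycle : ∀ g h k, ω g h * ω (g * h) k = ω h k * ω g (h * k))
    (hω : ∀ g h, ‖ω g h‖ = 1)
    (hmnc : ∀ g, (∀ h, ω g h = ω h g) → g = 1)
    (V : G → Matrix (Fin n) (Fin n) ℂ) (V' : G → Matrix (Fin m) (Fin m) ℂ)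
    (hVunit : ∀ g, V g ∈ Matrix.unitaryGroup (Fin n) ℂ)
    (hV'unit : ∀ g, V' g ∈ Matrix.unitaryGroup (Fin m) ℂ)
    (hVproj : ∀ g h, V g * V h = ω g h • V (g * h))
    (hV'proj : ∀ g h, V' g * V' h = ω g h • V' (g * h))
    (hVirr : ∀ p : Submodule ℂ (Fin n → ℂ),
      (∀ g, p.map (Matrix.toLin' (V g)) ≤ p) → p = ⊥ ∨ p = ⊤)
    (hV'irr : ∀ p : Submodule ℂ (Fin m → ℂ),
      (∀ g, p.map (Matrix.toLin' (V' g)) ≤ p) → p = ⊥ ∨ p = ⊤) :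
    ∃ U : Matrix (Fin m) (Fin n) ℂ,
      Uᴴ * U = 1 ∧ U * Uᴴ = 1 ∧ ∀ g, V' g = U * V g * Uᴴ :=
  unique_irreducible_of_maximally_non_commutative_general hn hm ω hω hmnc V V' hVunit hV'unit hVproj
    hV'proj hVirr hV'irr
end

section
/- Let u be a linear unitary representation of a finite abelian group G on a finite-dimensional Hilbert space, and ω a maximally non-commutative factor system of G. For each simultaneous eigenvector |i⟩ of u with character χ_i (i.e., u(g)|i⟩ = χ_i(g)|i⟩), there exists g_i ∈ G such that χ_i(g) V(g) = V(g_i) V(g) V(g_i)† for all g ∈ G and for any projective representation V with factor system ω. -/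
/-!
For a factor system `ω` of an abelian group, `β g h = ω g h / ω h g` is a bicharacter, and
`V g * V h = β g h • (V h * V g)` for every projective representation `V` with factor system `ω`.
Maximal non-commutativity says that `g ↦ β g ·` is injective from `G` into its dual; since
`|G| = |Ĝ|` it is onto, so the character `χ` of the common eigenvector is `β gᵢ ·` for some `gᵢ`,
and conjugating by the unitary `V gᵢ` multiplies `V g` by `χ g`.
-/

open Matrix

section Eigenvalue

variable {G K n : Type*} [Monoid G] [Field K] [Fintype n] [DecidableEq n]

def eigenvalueHom (ρ : G →* Matrix n n K) {v : n → K} (hv : v ≠ 0) (χ : G → K)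
    (heig : ∀ g, ρ g *ᵥ v = χ g • v) : G →* K where
  toFun := χ
  map_one' := smul_left_injective K hv <| by simp only [← heig 1, map_one, one_mulVec, one_smul]
  map_mul' g h := smul_left_injective K hv <| by
    show χ (g * h) • v = (χ g * χ h) • v
    rw [← heig, map_mul, ← mulVec_mulVec, heig, mulVec_smul, heig, smul_smul, mul_comm (χ h)]

end Eigenvalue

section CommutatorPairing

variable {G K : Type*} [CommGroup G] [Field K] {ω : G → G → K}
  (hcocycle : ∀ g h k, ω g h * ω (g * h) k = ω h k * ω g (h * k)) (hω0 : ∀ g h, ω g h ≠ 0)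

include hcocycle hω0 in
theorem cocycle_div_swap_mul_right (g h k : G) :
    ω g (h * k) / ω (h * k) g = ω g h / ω h g * (ω g k / ω k g) := by
  have hghk := hcocycle g h k
  have hhgk := hcocycle h g k
  have hhkg := hcocycle h k g
  rw [mul_comm h g] at hhgk
  rw [mul_comm k g] at hhkg
  rw [div_mul_div_comm, div_eq_div_iff (hω0 _ _) (mul_ne_zero (hω0 _ _) (hω0 _ _))]
  apply mul_left_cancel₀ (hω0 h k)
  linear_combination (-(ω h g * ω k g)) * hghk + (ω g h * ω k g) * hhgk - (ω g h * ω g k) * hhkg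

def commutatorPairing : G →* G →* Kˣ :=
  MonoidHom.mk'
    (fun g => MonoidHom.mk' (fun h => Units.mk0 (ω g h / ω h g) (div_ne_zero (hω0 g h) (hω0 h g)))
      fun h k => Units.ext (cocycle_div_swap_mul_right hcocycle hω0 g h k))
    fun g g' => MonoidHom.ext fun h => Units.ext <| by
      simp only [Units.val_mk0, MonoidHom.mk'_apply, MonoidHom.mul_apply, Units.val_mul]
      rw [← inv_div, cocycle_div_swap_mul_right hcocycle hω0, mul_inv, inv_div, inv_div]

theorem commutatorPairing_apply (g h : G) :
    (commutatorPairing hcocycle hω0 g h : K) = ω g h / ω h g := rfl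

theorem commutatorPairing_injective (hmnc : ∀ g, (∀ h, ω g h = ω h g) → g = 1) :
    Function.Injective (commutatorPairing hcocycle hω0) := by
  refine (injective_iff_map_eq_one _).mpr fun g hg => hmnc g fun h => ?_
  have := congr_arg Units.val (DFunLike.congr_fun hg h)
  rwa [commutatorPairing_apply, MonoidHom.one_apply, Units.val_one,
    div_eq_one_iff_eq (hω0 h g)] at this

end CommutatorPairing

theorem surjective_of_injective_into_dual {G M : Type*} [CommGroup G] [Finite G] [CommMonoid M]
    [HasEnoughRootsOfUnity M (Monoid.exponent G)] {f : G → G →* Mˣ}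
    (hf : Function.Injective f) : Function.Surjective f := by
  have hcard := CommGroup.card_monoidHom_of_hasEnoughRootsOfUnity G M
  have : Finite (G →* Mˣ) := Nat.finite_of_card_ne_zero (hcard ▸ Nat.card_pos.ne')
  exact (hf.bijective_of_nat_card_le hcard.le).2

theorem unitary_mul_mul_star_eq_smul {R S : Type*} [Monoid R] [StarMul R] [SMul S R]
    [IsScalarTower S R R] {a : R} (ha : a ∈ unitary R) {b : R} {c : S}
    (hab : a * b = c • (b * a)) : a * b * star a = c • b := by
  rw [hab, smul_mul_assoc, mul_assoc, Unitary.mul_star_self_of_mem ha, mul_one]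

theorem character_conjugation_lemma_general
    {G : Type*} [CommGroup G] [Fintype G] {d : ℕ}
    (ω : G → G → ℂ)
    (hcocycle : ∀ g h k, ω g h * ω (g * h) k = ω h k * ω g (h * k))
    (hω : ∀ g h, ‖ω g h‖ = 1)
    (hmnc : ∀ g, (∀ h, ω g h = ω h g) → g = 1)
    (u : G → Matrix (Fin d) (Fin d) ℂ)
    (huhom : ∀ g h, u g * u h = u (g * h)) (huone : u 1 = 1)
    (v : Fin d → ℂ) (hv : v ≠ 0) (χ : G → ℂ)
    (heig : ∀ g, (u g).mulVec v = χ g • v) :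
    ∃ gi : G, ∀ (n : ℕ) (V : G → Matrix (Fin n) (Fin n) ℂ),
      (∀ g, V g ∈ Matrix.unitaryGroup (Fin n) ℂ) →
      (∀ g h, V g * V h = ω g h • V (g * h)) →
      ∀ g, χ g • V g = V gi * V g * (V gi)ᴴ := by
  have hω0 : ∀ g h, ω g h ≠ 0 := fun g h => norm_ne_zero_iff.mp (by simp [hω])
  let ρ : G →* Matrix (Fin d) (Fin d) ℂ := ⟨⟨u, huone⟩, fun g h => (huhom g h).symm⟩
  obtain ⟨gi, hgi⟩ := surjective_of_injective_into_dual
    (commutatorPairing_injective hcocycle hω0 hmnc) (eigenvalueHom ρ hv χ heig).toHomUnits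
  have hcomm : ∀ g, ω gi g = χ g * ω g gi := fun g => by
    rw [← div_eq_iff (hω0 g gi), ← commutatorPairing_apply hcocycle hω0, hgi]
    rfl
  refine ⟨gi, fun n V hVunit hVmul g => ?_⟩
  refine (unitary_mul_mul_star_eq_smul (hVunit gi) ?_).symm
  rw [hVmul, hVmul, hcomm, mul_comm gi, mul_smul]

/-- Lemma 3 of the paper: let `u` be a linear unitary representation of a finite
abelian group `G` on a finite-dimensional Hilbert space and `ω` a maximally
non-commutative factor system of `G`.  For each simultaneous eigenvector `v` of `u`
with character `χ` (i.e. `u(g) v = χ(g) v`), there exists `g_i ∈ G` such that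
`χ(g) V(g) = V(g_i) V(g) V(g_i)†` for all `g ∈ G` and every projective unitary
representation `V` with factor system `ω`. -/
theorem character_conjugation_lemma
    {G : Type*} [CommGroup G] [Fintype G] {d : ℕ}
    (ω : G → G → ℂ)
    (hcocycle : ∀ g h k, ω g h * ω (g * h) k = ω h k * ω g (h * k))
    (hω : ∀ g h, ‖ω g h‖ = 1)
    (hmnc : ∀ g, (∀ h, ω g h = ω h g) → g = 1)
    (u : G → Matrix (Fin d) (Fin d) ℂ)
    (huunit : ∀ g, u g ∈ Matrix.unitaryGroup (Fin d) ℂ)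
    (huhom : ∀ g h, u g * u h = u (g * h)) (huone : u 1 = 1)
    (v : Fin d → ℂ) (hv : v ≠ 0) (χ : G → ℂ)
    (heig : ∀ g, (u g).mulVec v = χ g • v) :
    ∃ gi : G, ∀ (n : ℕ) (V : G → Matrix (Fin n) (Fin n) ℂ),
      (∀ g, V g ∈ Matrix.unitaryGroup (Fin n) ℂ) →
      (∀ g h, V g * V h = ω g h • V (g * h)) →
      ∀ g, χ g • V g = V gi * V g * (V gi)ᴴ :=
  character_conjugation_lemma_general ω hcocycle hω hmnc u huhom huone v hv χ heig
end

section
/- For a finite abelian group G with maximally non-commutative factor system ω, the map sending g ∈ G to the character h ↦ ω(g,h)ω(h,g)⁻¹ is a group isomorphism from G onto its character group Ĝ. -/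
/-!
The cocycle identity makes the antisymmetrisation `β(g, h) = ω(g, h) / ω(h, g)` multiplicative in
each variable, so `g ↦ β(g, ·)` is a homomorphism `G →* Ĝ`. Its kernel consists of the `g` with
`ω(g, h) = ω(h, g)` for all `h`, which is trivial by maximal non-commutativity; since
`|Ĝ| = |G|`, injectivity gives bijectivity.
-/

open Function

section CommPairing

variable {G M : Type*} [CommGroup M] (ω : G → G → M)

def commPairing (g h : G) : M := ω g h / ω h g

theorem commPairing_swap (g h : G) : commPairing ω h g = (commPairing ω g h)⁻¹ :=
  (inv_div _ _).symm

theorem commPairing_eq_one_iff {g h : G} : commPairing ω g h = 1 ↔ ω g h = ω h g :=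
  div_eq_one

variable [CommGroup G]

/-- A 2-cocycle for the trivial action of `G` on `M`, in curried form. -/
def IsTwoCocycle : Prop := ∀ g h k, ω g h * ω (g * h) k = ω h k * ω g (h * k)

theorem commPairing_mul_right (hω : IsTwoCocycle ω) (g h k : G) :
    commPairing ω g (h * k) = commPairing ω g h * commPairing ω g k := by
  have e₁ : ω g (h * k) = ω g h * ω (g * h) k / ω h k := by
    rw [eq_div_iff_mul_eq', hω g h k, mul_comm]
  have e₂ : ω (h * k) g = ω k g * ω h (g * k) / ω h k := by
    rw [eq_div_iff_mul_eq', mul_comm, hω h k g, mul_comm k g]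
  have e₃ : ω h (g * k) = ω h g * ω (g * h) k / ω g k := by
    rw [eq_div_iff_mul_eq', mul_comm g h, hω h g k, mul_comm]
  simp only [commPairing, e₁, e₂, e₃]
  apply Additive.ofMul.injective
  simp only [ofMul_mul, ofMul_div]
  abel

theorem commPairing_mul_left (hω : IsTwoCocycle ω) (g h k : G) :
    commPairing ω (g * h) k = commPairing ω g k * commPairing ω h k := by
  rw [commPairing_swap, commPairing_mul_right ω hω, mul_inv, ← commPairing_swap,
    ← commPairing_swap]

def commPairingHom (hω : IsTwoCocycle ω) : G →* G →* M :=
  MonoidHom.mk' (fun g ↦ MonoidHom.mk' (commPairing ω g) (commPairing_mul_right ω hω g))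
    fun g h ↦ MonoidHom.ext (commPairing_mul_left ω hω g h)

theorem commPairingHom_apply (hω : IsTwoCocycle ω) (g h : G) :
    commPairingHom ω hω g h = commPairing ω g h :=
  rfl

theorem injective_commPairingHom_iff (hω : IsTwoCocycle ω) :
    Injective (commPairingHom ω hω) ↔ ∀ g, (∀ h, ω g h = ω h g) → g = 1 := by
  simp only [injective_iff_map_eq_one, MonoidHom.ext_iff, commPairingHom_apply,
    MonoidHom.one_apply, commPairing_eq_one_iff]

end CommPairing

theorem bijective_of_injective_to_dual {G M : Type*} [CommGroup G] [Finite G] [CommMonoid M]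
    [HasEnoughRootsOfUnity M (Monoid.exponent G)] {φ : G → G →* Mˣ} (hφ : Injective φ) :
    Bijective φ := by
  have e := (CommGroup.monoidHom_mulEquiv_of_hasEnoughRootsOfUnity G M).some
  have : Finite (G →* Mˣ) := Finite.of_equiv G e.symm.toEquiv
  exact (Nat.bijective_iff_injective_and_card φ).mpr
    ⟨hφ, (CommGroup.card_monoidHom_of_hasEnoughRootsOfUnity G M).symm⟩

theorem maximally_non_commutative_pairing_bijective_general
    {G : Type*} [CommGroup G] [Fintype G]
    (ω : G → G → ℂˣ)
    (hcocycle : ∀ g h k, ω g h * ω (g * h) k = ω h k * ω g (h * k))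
    (hmnc : ∀ g, (∀ h, ω g h = ω h g) → g = 1) :
    ∃ φ : G →* (G →* ℂˣ),
      Function.Bijective φ ∧ ∀ g h, φ g h = ω g h * (ω h g)⁻¹ :=
  ⟨commPairingHom ω hcocycle,
    bijective_of_injective_to_dual ((injective_commPairingHom_iff ω hcocycle).mpr hmnc),
    fun _ _ ↦ div_eq_mul_inv _ _⟩

/-- For a finite abelian group `G` with a maximally non-commutative factor system `ω`
(a 2-cocycle with unit-modulus values), the map sending `g ∈ G` to the character
`h ↦ ω(g,h) ω(h,g)⁻¹` is a group isomorphism from `G` onto its character group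
`Ĝ = Hom(G, ℂˣ)`. -/
theorem maximally_non_commutative_pairing_bijective
    {G : Type*} [CommGroup G] [Fintype G]
    (ω : G → G → ℂˣ)
    (hcocycle : ∀ g h k, ω g h * ω (g * h) k = ω h k * ω g (h * k))
    (hω : ∀ g h, ‖(ω g h : ℂ)‖ = 1)
    (hmnc : ∀ g, (∀ h, ω g h = ω h g) → g = 1) :
    ∃ φ : G →* (G →* ℂˣ),
      Function.Bijective φ ∧ ∀ g h, φ g h = ω g h * (ω h g)⁻¹ :=
  maximally_non_commutative_pairing_bijective_general ω hcocycle hmnc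
end

section
/- Let D_1 = Σ_i |i⟩⟨i| ⊗ V(g_i)† be a unitary on H_site ⊗ H_V, where {|i⟩} is a simultaneous eigenbasis of a linear representation u of a finite abelian group G on H_site with characters χ_i, V is a projective representation of G with maximally non-commutative factor system, and g_i ∈ G satisfies χ_i(g)V(g) = V(g_i)V(g)V(g_i)† for all g. Then D_1 (u(g) ⊗ V(g)) D_1† = I ⊗ V(g) for all g ∈ G. -/
open Matrix Kronecker

/-- The key disentangling computation (Eqs. (41)–(43) of the paper): with
`D₁ = Σ_i |i⟩⟨i| ⊗ V(g_i)†` (where `{|i⟩}` is a simultaneous eigenbasis of the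
linear representation `u` with characters `χ_i`, and `g_i` satisfies
`χ_i(g) V(g) = V(g_i) V(g) V(g_i)†`), one has
`D₁ (u(g) ⊗ V(g)) D₁† = I ⊗ V(g)` for all `g ∈ G`. -/
theorem disentangler_conjugation
    {G : Type*} [CommGroup G] [Fintype G] {d n : ℕ}
    (ω : G → G → ℂ)
    (hcocycle : ∀ g h k, ω g h * ω (g * h) k = ω h k * ω g (h * k))
    (hmnc : ∀ g, (∀ h, ω g h = ω h g) → g = 1)
    (u : G → Matrix (Fin d) (Fin d) ℂ) (χ : Fin d → G → ℂ)
    (hu : ∀ g, u g = Matrix.diagonal fun i => χ i g)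
    (V : G → Matrix (Fin n) (Fin n) ℂ)
    (hVunit : ∀ g, V g ∈ Matrix.unitaryGroup (Fin n) ℂ)
    (hVproj : ∀ g h, V g * V h = ω g h • V (g * h))
    (gi : Fin d → G)
    (hgi : ∀ i g, χ i g • V g = V (gi i) * V g * (V (gi i))ᴴ) :
    ∀ g : G,
      (Matrix.of fun p q : Fin d × Fin n =>
          if p.1 = q.1 then (V (gi p.1))ᴴ p.2 q.2 else 0) *
        (u g ⊗ₖ V g) *
        (Matrix.of fun p q : Fin d × Fin n =>
          if p.1 = q.1 then (V (gi p.1))ᴴ p.2 q.2 else 0)ᴴ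
      = (1 : Matrix (Fin d) (Fin d) ℂ) ⊗ₖ V g := by
  have key : ∀ (i : Fin d) (g : G),
      χ i g • ((V (gi i))ᴴ * V g * V (gi i)) = V g := by
    intro i g
    have hU := (hVunit (gi i)).1
    have h1 : (V (gi i))ᴴ * V (gi i) = 1 := hU
    calc χ i g • ((V (gi i))ᴴ * V g * V (gi i))
        = (V (gi i))ᴴ * (χ i g • V g) * V (gi i) := by
          simp [Matrix.mul_smul, Matrix.smul_mul]
      _ = (V (gi i))ᴴ * (V (gi i) * V g * (V (gi i))ᴴ) * V (gi i) := by rw [hgi]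
      _ = ((V (gi i))ᴴ * V (gi i)) * V g * ((V (gi i))ᴴ * V (gi i)) := by
          noncomm_ring
      _ = V g := by rw [h1]; simp
  intro g
  ext ⟨i, a⟩ ⟨j, b⟩
  simp only [Matrix.mul_apply, Matrix.conjTranspose_apply, Matrix.of_apply,
    Matrix.kroneckerMap_apply, hu, Matrix.diagonal_apply, Fintype.sum_prod_type,
    ite_mul, mul_ite, zero_mul, mul_zero, apply_ite (starRingEnd ℂ), map_zero,
    Finset.sum_ite_eq, Finset.sum_ite_eq', Finset.mem_univ, if_true,
    Matrix.one_apply]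
  simp only [Finset.sum_ite_eq', Finset.mem_univ, if_true, ite_mul, mul_ite,
    zero_mul, mul_zero, apply_ite (star : ℂ → ℂ), star_zero, star_star,
    Finset.sum_ite_eq, Finset.sum_ite_irrel, Finset.sum_const_zero]
  rcases eq_or_ne i j with rfl | hij
  · simp only [if_true, one_mul]
    have hk := congrFun (congrFun (key i g) a) b
    simp only [Matrix.smul_apply, Matrix.mul_apply, Matrix.conjTranspose_apply,
      smul_eq_mul, Finset.mul_sum, Finset.sum_mul] at hk
    rw [← hk]
    refine Finset.sum_congr rfl fun x _ => ?_
    rw [Finset.sum_mul]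
    exact Finset.sum_congr rfl fun y _ => by ring
  · simp [hij]
end

section
/- Let ⟨·⟩ be a state (positive normalized linear functional) on observables, and let X₁,...,X_m be disjoint regions with a two-point decay bound: |⟨A_X B_Y⟩ − ⟨A_X⟩⟨B_Y⟩| ≤ f(dist(X,Y)) · min{|X|,|Y|} · ‖A_X‖‖B_Y‖ for observables supported on disjoint X, Y. Then for observables A_{X₁},...,A_{X_m} supported on the respective regions, |⟨A_{X₁}⋯A_{X_m}⟩ − ⟨A_{X₁}⟩⋯⟨A_{X_m}⟩| ≤ f(R) · N · ‖A_{X₁}‖⋯‖A_{X_m}‖, where R = min_{k≠l} dist(X_k, X_l) and N = Σ_k |X_k|. -/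
/-! Induction on `m`, splitting off the first observable. The product `B = A₂⋯A_m` is supported
on `X₂ ∪ ⋯ ∪ X_m`, which lies at distance `≥ R` from `X₁`, so the two-point bound (with
`min ≤ |X₁|`) controls `⟨A₁B⟩ − ⟨A₁⟩⟨B⟩` by `f(R)·|X₁|·‖A₁‖‖B‖`, while `⟨A₁⟩(⟨B⟩ − ⟨A₂⟩⋯⟨A_m⟩)`
is at most `‖A₁‖` times the inductive bound. The region sizes then add up to `N`. -/

open Finset

theorem ofFn_prod_mem_biUnion {ι Alg : Type*} [Monoid Alg] [DecidableEq ι]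
    (P : Finset ι → Set Alg)
    (hPmul : ∀ (S T : Finset ι) (a b : Alg), a ∈ P S → b ∈ P T → a * b ∈ P (S ∪ T))
    {n : ℕ} (X : Fin (n + 1) → Finset ι) (A : Fin (n + 1) → Alg) (hA : ∀ k, A k ∈ P (X k)) :
    (List.ofFn A).prod ∈ P (univ.biUnion X) := by
  induction n with
  | zero => simpa [List.ofFn_succ] using hA 0
  | succ n ih =>
    have hunion : X 0 ∪ univ.biUnion (fun k : Fin (n + 1) => X k.succ) = univ.biUnion X := by
      ext; simp [Fin.exists_fin_succ]
    rw [List.ofFn_succ, List.prod_cons, ← hunion]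
    exact hPmul _ _ _ _ (hA 0) (ih _ _ fun k => hA k.succ)

theorem norm_ofFn_prod_le {Alg : Type*} [SeminormedRing Alg] {n : ℕ} (A : Fin (n + 1) → Alg) :
    ‖(List.ofFn A).prod‖ ≤ ∏ k, ‖A k‖ := by
  refine (List.norm_prod_le' (mt List.ofFn_eq_nil_iff.1 n.succ_ne_zero)).trans_eq ?_
  rw [List.map_ofFn, List.prod_ofFn]
  rfl

theorem norm_map_mul_sub_mul_le {Alg : Type*} [Mul Alg] [Norm Alg] (φ : Alg → ℂ) {a : Alg}
    (ha : ‖φ a‖ ≤ ‖a‖) (b : Alg) (z : ℂ) :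
    ‖φ (a * b) - φ a * z‖ ≤ ‖φ (a * b) - φ a * φ b‖ + ‖a‖ * ‖φ b - z‖ := by
  calc ‖φ (a * b) - φ a * z‖ = ‖(φ (a * b) - φ a * φ b) + φ a * (φ b - z)‖ := by ring_nf
    _ ≤ ‖φ (a * b) - φ a * φ b‖ + ‖φ a‖ * ‖φ b - z‖ := by
      rw [← norm_mul]; exact norm_add_le _ _
    _ ≤ ‖φ (a * b) - φ a * φ b‖ + ‖a‖ * ‖φ b - z‖ := by gcongr

theorem norm_ofFn_prod_sub_prod_le {ι Alg : Type*} [NormedRing Alg] [DecidableEq ι]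
    (d : ι → ι → ℝ) (P : Finset ι → Set Alg) (φ : Alg → ℂ) {c R : ℝ} (hc : 0 ≤ c)
    (hφnorm : ∀ a, ‖φ a‖ ≤ ‖a‖)
    (hPmul : ∀ (S T : Finset ι) (a b : Alg), a ∈ P S → b ∈ P T → a * b ∈ P (S ∪ T))
    (htwo : ∀ (S T : Finset ι) (a b : Alg), a ∈ P S → b ∈ P T →
      Disjoint S T → (∀ x ∈ S, ∀ y ∈ T, R ≤ d x y) →
      ‖φ (a * b) - φ a * φ b‖ ≤ c * min S.card T.card * (‖a‖ * ‖b‖))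
    {n : ℕ} (X : Fin (n + 1) → Finset ι) (hdisj : ∀ k l, k ≠ l → Disjoint (X k) (X l))
    (A : Fin (n + 1) → Alg) (hA : ∀ k, A k ∈ P (X k))
    (hR : ∀ k l, k ≠ l → ∀ x ∈ X k, ∀ y ∈ X l, R ≤ d x y) :
    ‖φ (List.ofFn A).prod - ∏ k, φ (A k)‖ ≤ c * (∑ k, ((X k).card : ℝ)) * ∏ k, ‖A k‖ := by
  induction n with
  | zero =>
    rw [List.ofFn_succ, List.ofFn_zero, List.prod_singleton, Fin.prod_univ_succ,
      Fin.prod_univ_zero, mul_one, sub_self, norm_zero]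
    positivity
  | succ n ih =>
    rw [List.ofFn_succ, List.prod_cons, Fin.prod_univ_succ (f := fun k => φ (A k)),
      Fin.sum_univ_succ, Fin.prod_univ_succ (f := fun k => ‖A k‖)]
    set B := (List.ofFn fun k : Fin (n + 1) => A k.succ).prod
    set Φ := ∏ k : Fin (n + 1), φ (A k.succ)
    set M := ∏ k : Fin (n + 1), ‖A k.succ‖
    set N := ∑ k : Fin (n + 1), ((X k.succ).card : ℝ)
    have hB : B ∈ P (univ.biUnion fun k : Fin (n + 1) => X k.succ) :=
      ofFn_prod_mem_biUnion P hPmul _ _ fun k => hA k.succ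
    have hdisjB : Disjoint (X 0) (univ.biUnion fun k : Fin (n + 1) => X k.succ) :=
      (disjoint_biUnion_right _ _ _).2 fun k _ => hdisj 0 k.succ (Fin.succ_ne_zero k).symm
    have hsepB : ∀ x ∈ X 0, ∀ y ∈ univ.biUnion (fun k : Fin (n + 1) => X k.succ), R ≤ d x y := by
      intro x hx y hy
      obtain ⟨k, -, hy⟩ := mem_biUnion.1 hy
      exact hR 0 k.succ (Fin.succ_ne_zero k).symm x hx y hy
    have hhead : ‖φ (A 0 * B) - φ (A 0) * φ B‖ ≤ c * (X 0).card * (‖A 0‖ * M) := by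
      refine (htwo _ _ _ _ (hA 0) hB hdisjB hsepB).trans ?_
      gcongr
      · exact_mod_cast min_le_left _ _
      · exact norm_ofFn_prod_le _
    have htail : ‖φ B - Φ‖ ≤ c * N * M :=
      ih (fun k => X k.succ) (fun k l h => hdisj _ _ (Fin.succ_injective _ |>.ne h))
        (fun k => A k.succ) (fun k => hA k.succ)
        (fun k l h => hR _ _ (Fin.succ_injective _ |>.ne h))
    calc ‖φ (A 0 * B) - φ (A 0) * Φ‖
        ≤ ‖φ (A 0 * B) - φ (A 0) * φ B‖ + ‖A 0‖ * ‖φ B - Φ‖ :=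
          norm_map_mul_sub_mul_le φ (hφnorm _) B _
      _ ≤ c * (X 0).card * (‖A 0‖ * M) + ‖A 0‖ * (c * N * M) := by gcongr
      _ = c * ((X 0).card + N) * (‖A 0‖ * M) := by ring

/-- Lemma 4 of Appendix C (multi-region clustering).  Let `φ` be a state (a linear
functional with `|φ(a)| ≤ ‖a‖` and `φ(1) = 1`) on an algebra of observables, with a
notion of support `P : Finset ι → Set Alg` on regions of a lattice with distance `d`,
closed under products (`a ∈ P S`, `b ∈ P T` implies `a b ∈ P (S ∪ T)`).  Assume the
two-point decay bound: for observables `a, b` supported on disjoint regions `S, T`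
whose pairwise distances are at least `r`,
`|φ(ab) − φ(a)φ(b)| ≤ f(r) · min{|S|,|T|} · ‖a‖ ‖b‖` (with `f ≥ 0`).  Then for
observables `A₁, …, A_m` supported on pairwise disjoint regions `X₁, …, X_m` whose
mutual distances are at least `R`,
`|φ(A₁⋯A_m) − φ(A₁)⋯φ(A_m)| ≤ f(R) · N · ‖A₁‖⋯‖A_m‖`, where `N = Σ_k |X_k|`. -/
theorem multi_region_clustering
    {ι Alg : Type*} [NormedRing Alg] [NormedAlgebra ℂ Alg] [DecidableEq ι]
    (d : ι → ι → ℝ) (P : Finset ι → Set Alg) (φ : Alg →ₗ[ℂ] ℂ) (f : ℝ → ℝ)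
    (hφnorm : ∀ a, ‖φ a‖ ≤ ‖a‖) (hφone : φ 1 = 1)
    (hPmul : ∀ (S T : Finset ι) (a b : Alg), a ∈ P S → b ∈ P T → a * b ∈ P (S ∪ T))
    (hf : ∀ r, 0 ≤ f r)
    (htwo : ∀ (S T : Finset ι) (a b : Alg) (r : ℝ), a ∈ P S → b ∈ P T →
      Disjoint S T → (∀ x ∈ S, ∀ y ∈ T, r ≤ d x y) →
      ‖φ (a * b) - φ a * φ b‖ ≤ f r * min S.card T.card * (‖a‖ * ‖b‖))
    {m : ℕ} (X : Fin m → Finset ι)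
    (hdisj : ∀ k l, k ≠ l → Disjoint (X k) (X l))
    (A : Fin m → Alg) (hA : ∀ k, A k ∈ P (X k))
    (R : ℝ) (hR : ∀ k l, k ≠ l → ∀ x ∈ X k, ∀ y ∈ X l, R ≤ d x y) :
    ‖φ (((List.finRange m).map A).prod) - ∏ k, φ (A k)‖
      ≤ f R * (∑ k, ((X k).card : ℝ)) * ∏ k, ‖A k‖ := by
  rw [← List.ofFn_eq_map]
  cases m with
  | zero => simp [hφone]
  | succ n =>
    exact norm_ofFn_prod_sub_prod_le d P φ (hf R) hφnorm hPmul
      (fun S T a b => htwo S T a b R) X hdisj A hA hR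
end

section
/- Let ρ be a density operator on a tensor product ⨂_{k=1}^m H_k with dim H_k = d^{|X_k|}, let ρ_k be its marginal on H_k, and suppose the multi-region correlation bound |Tr(ρ (A₁⊗⋯⊗A_m)) − ∏_k Tr(ρ_k A_k)| ≤ f(R) N ∏_k ‖A_k‖ holds for all observables A_k on H_k, where N = Σ_k |X_k|. Then ‖ρ − ⨂_k ρ_k‖₁ ≤ N f(R) d^{2N}. -/
open Matrix
open scoped ComplexOrder

/-- The trace norm `‖A‖₁ = Tr √(A†A)`. -/
noncomputable def traceNorm {n : Type*} [Fintype n] [DecidableEq n]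
    (A : Matrix n n ℂ) : ℝ :=
  (((Matrix.posSemidef_conjTranspose_mul_self A).1.eigenvectorUnitary.1 *
      Matrix.diagonal (((↑) : ℝ → ℂ) ∘ (√·) ∘ (Matrix.posSemidef_conjTranspose_mul_self A).1.eigenvalues) *
      (star (Matrix.posSemidef_conjTranspose_mul_self A).1.eigenvectorUnitary : Matrix n n ℂ)).trace).re

/-- The operator (spectral) norm of a matrix. -/
noncomputable def opNorm {n : Type*} [Fintype n] [DecidableEq n]
    (A : Matrix n n ℂ) : ℝ :=
  ‖Matrix.toEuclideanCLM (𝕜 := ℂ) A‖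

/-- The tensor (Kronecker) product of a family of matrices. -/
noncomputable def kronPi {m : ℕ} {n : Fin m → ℕ}
    (A : (k : Fin m) → Matrix (Fin (n k)) (Fin (n k)) ℂ) :
    Matrix ((k : Fin m) → Fin (n k)) ((k : Fin m) → Fin (n k)) ℂ :=
  Matrix.of fun v w => ∏ k, A k (v k) (w k)

/-!
For a Hermitian matrix `P` the trace norm is the sum of the absolute eigenvalues, and each
eigenvalue `⟨u, P u⟩` (`u` a unit eigenvector) is at most `∑_{v,w} |u_v| |P_vw| |u_w|` in absolute
value; summing over an orthonormal eigenbasis and using Cauchy–Schwarz on its coordinates bounds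
`‖P‖₁` by the entrywise `ℓ¹` norm of `P`. Testing the correlation bound on tensor products of
matrix units, which have operator norm `1`, bounds every entry of `ρ - ⨂ₖ ρₖ` by `N f(R)`, and
there are `d^{2N}` entries.
-/

section

variable {𝕜 n ι : Type*} [RCLike 𝕜] [Fintype n] [DecidableEq n] [Fintype ι]

lemma OrthonormalBasis.sum_norm_apply_sq (b : OrthonormalBasis ι 𝕜 (EuclideanSpace 𝕜 n)) (v : n) :
    ∑ i, ‖b i v‖ ^ 2 = 1 := by
  simpa [EuclideanSpace.inner_single_left] using b.sum_sq_norm_inner_left (EuclideanSpace.single v 1)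

lemma OrthonormalBasis.sum_norm_apply_mul_norm_apply_le_one
    (b : OrthonormalBasis ι 𝕜 (EuclideanSpace 𝕜 n)) (v w : n) :
    ∑ i, ‖b i v‖ * ‖b i w‖ ≤ 1 := by
  have h := Finset.sum_mul_sq_le_sq_mul_sq Finset.univ (fun i => ‖b i v‖) (fun i => ‖b i w‖)
  rw [b.sum_norm_apply_sq, b.sum_norm_apply_sq, mul_one] at h
  exact (pow_le_one_iff_of_nonneg (by positivity) two_ne_zero).mp h

lemma Matrix.IsHermitian.trace_cfc {A : Matrix n n 𝕜} (hA : A.IsHermitian) (f : ℝ → ℝ) :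
    (cfc f A).trace = ∑ i, (f (hA.eigenvalues i) : 𝕜) := by
  rw [hA.cfc_eq, IsHermitian.cfc, Unitary.conjStarAlgAut_apply, trace_mul_cycle,
    Unitary.coe_star_mul_self, one_mul, trace_diagonal]
  rfl

lemma Matrix.IsHermitian.sum_abs_eigenvalues_le {A : Matrix n n 𝕜} (hA : A.IsHermitian) :
    ∑ i, |hA.eigenvalues i| ≤ ∑ v, ∑ w, ‖A v w‖ := by
  set u := hA.eigenvectorBasis
  have habs (i : n) : |hA.eigenvalues i| ≤ ∑ v, ∑ w, ‖A v w‖ * (‖u i v‖ * ‖u i w‖) := by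
    rw [hA.eigenvalues_eq]
    refine (RCLike.abs_re_le_norm _).trans ?_
    simp only [dotProduct, mulVec, Finset.mul_sum]
    refine (norm_sum_le _ _).trans (Finset.sum_le_sum fun v _ => ?_)
    refine (norm_sum_le _ _).trans (Finset.sum_le_sum fun w _ => ?_)
    simp only [norm_mul, Pi.star_apply, norm_star]
    exact le_of_eq (by ring)
  calc ∑ i, |hA.eigenvalues i|
      ≤ ∑ i, ∑ v, ∑ w, ‖A v w‖ * (‖u i v‖ * ‖u i w‖) := Finset.sum_le_sum fun i _ => habs i
    _ = ∑ v, ∑ w, ‖A v w‖ * ∑ i, ‖u i v‖ * ‖u i w‖ := by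
        simp only [Finset.mul_sum]
        rw [Finset.sum_comm]
        exact Finset.sum_congr rfl fun v _ => Finset.sum_comm
    _ ≤ ∑ v, ∑ w, ‖A v w‖ := by
        gcongr with v _ w _
        exact mul_le_of_le_one_right (norm_nonneg _) (u.sum_norm_apply_mul_norm_apply_le_one v w)

end

lemma traceNorm_eq_re_trace_cfc_sqrt {n : Type*} [Fintype n] [DecidableEq n] (A : Matrix n n ℂ) :
    traceNorm A = (cfc Real.sqrt (Aᴴ * A)).trace.re := by
  rw [(posSemidef_conjTranspose_mul_self A).1.cfc_eq, IsHermitian.cfc, Unitary.conjStarAlgAut_apply]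
  rfl

lemma Matrix.IsHermitian.traceNorm_eq_sum_abs_eigenvalues {n : Type*} [Fintype n] [DecidableEq n]
    {A : Matrix n n ℂ} (hA : A.IsHermitian) : traceNorm A = ∑ i, |hA.eigenvalues i| := by
  have hsqrt : cfc Real.sqrt (Aᴴ * A) = cfc (fun x : ℝ => |x|) A := by
    rw [hA.eq, ← sq, ← cfc_comp_pow Real.sqrt 2 A Real.continuous_sqrt.continuousOn hA.isSelfAdjoint]
    exact cfc_congr fun x _ => Real.sqrt_sq_eq_abs x
  rw [traceNorm_eq_re_trace_cfc_sqrt, hsqrt, hA.trace_cfc, Complex.re_sum]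
  simp

lemma traceNorm_le_sum_norm_apply {n : Type*} [Fintype n] [DecidableEq n] {A : Matrix n n ℂ}
    (hA : A.IsHermitian) : traceNorm A ≤ ∑ v, ∑ w, ‖A v w‖ :=
  hA.traceNorm_eq_sum_abs_eigenvalues ▸ hA.sum_abs_eigenvalues_le

open scoped Matrix.Norms.L2Operator in
lemma opNorm_single_one {n : Type*} [Fintype n] [DecidableEq n] (i j : n) :
    opNorm (single i j (1 : ℂ)) = 1 := by
  have hsq : (single i j (1 : ℂ))ᴴ * single i j 1 = diagonal (Pi.single j 1) := by
    rw [conjTranspose_single, star_one, single_mul_single_same, one_mul, ← diagonal_single]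
  have h := l2_opNorm_conjTranspose_mul_self (single i j (1 : ℂ))
  rw [hsq, l2_opNorm_diagonal, Pi.norm_single, norm_one] at h
  rw [opNorm, l2_opNorm_toEuclideanCLM]
  nlinarith [norm_nonneg (single i j (1 : ℂ))]

lemma Fintype.card_pi_fin_pow {m : ℕ} (d : ℕ) (c : Fin m → ℕ) :
    Fintype.card ((k : Fin m) → Fin (d ^ c k)) = d ^ ∑ k, c k := by
  simp [Fintype.card_pi, Finset.prod_pow_eq_pow_sum]

section kronPi

variable {m : ℕ} {n : Fin m → ℕ}

lemma kronPi_single_one (i j : (k : Fin m) → Fin (n k)) :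
    kronPi (fun k => single (i k) (j k) (1 : ℂ)) = single i j 1 := by
  ext v w
  simp [kronPi, single_apply, Finset.prod_boole, funext_iff, forall_and]

lemma isHermitian_kronPi {A : (k : Fin m) → Matrix (Fin (n k)) (Fin (n k)) ℂ}
    (hA : ∀ k, (A k).IsHermitian) : (kronPi A).IsHermitian := by
  ext v w
  simp only [conjTranspose_apply, kronPi, of_apply, star_prod]
  exact Finset.prod_congr rfl fun k _ => (hA k).apply (v k) (w k)

lemma norm_sub_kronPi_apply_le
    {ρ : Matrix ((k : Fin m) → Fin (n k)) ((k : Fin m) → Fin (n k)) ℂ}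
    {σ : (k : Fin m) → Matrix (Fin (n k)) (Fin (n k)) ℂ} {C : ℝ}
    (hC : ∀ A : (k : Fin m) → Matrix (Fin (n k)) (Fin (n k)) ℂ,
      ‖(ρ * kronPi A).trace - ∏ k, (σ k * A k).trace‖ ≤ C * ∏ k, opNorm (A k))
    (v w : (k : Fin m) → Fin (n k)) :
    ‖(ρ - kronPi σ) v w‖ ≤ C := by
  have h := hC fun k => single (w k) (v k) 1
  simp only [kronPi_single_one, trace_mul_single, opNorm_single_one, MulOpposite.op_one, one_smul,
    Finset.prod_const_one, mul_one] at h
  exact h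

end kronPi

theorem factorization_from_correlation_bound_general
    {m d : ℕ} {c : Fin m → ℕ} (f : ℝ → ℝ) (R : ℝ)
    (ρ : Matrix ((k : Fin m) → Fin (d ^ c k)) ((k : Fin m) → Fin (d ^ c k)) ℂ)
    (ρk : (k : Fin m) → Matrix (Fin (d ^ c k)) (Fin (d ^ c k)) ℂ)
    (hρ : ρ.PosSemidef)
    (hρk : ∀ k, (ρk k).PosSemidef ∧ (ρk k).trace = 1)
    (hbound : ∀ A : (k : Fin m) → Matrix (Fin (d ^ c k)) (Fin (d ^ c k)) ℂ,
      ‖(ρ * kronPi A).trace - ∏ k, (ρk k * A k).trace‖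
        ≤ f R * (∑ k, (c k : ℝ)) * ∏ k, opNorm (A k)) :
    traceNorm (ρ - kronPi ρk)
      ≤ (∑ k, (c k : ℝ)) * f R * (d : ℝ) ^ (2 * ∑ k, c k) := by
  have hherm : (ρ - kronPi ρk).IsHermitian := hρ.1.sub (isHermitian_kronPi fun k => (hρk k).1.1)
  calc traceNorm (ρ - kronPi ρk)
      ≤ ∑ v, ∑ w, ‖(ρ - kronPi ρk) v w‖ := traceNorm_le_sum_norm_apply hherm
    _ ≤ ∑ _v : (k : Fin m) → Fin (d ^ c k), ∑ _w : (k : Fin m) → Fin (d ^ c k),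
          f R * ∑ k, (c k : ℝ) := by
        gcongr with v _ w _
        exact norm_sub_kronPi_apply_le hbound v w
    _ = (∑ k, (c k : ℝ)) * f R * (d : ℝ) ^ (2 * ∑ k, c k) := by
        simp only [Finset.sum_const, Finset.card_univ, Fintype.card_pi_fin_pow, nsmul_eq_mul]
        push_cast
        ring

/-- Theorem of Appendix C: let `ρ` be a density operator on `⨂_k H_k` with
`dim H_k = d^{|X_k|}`, with marginals `ρ_k`, satisfying the multi-region
correlation bound `|Tr(ρ (A₁ ⊗ ⋯ ⊗ A_m)) − ∏_k Tr(ρ_k A_k)| ≤ f(R) N ∏_k ‖A_k‖`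
(`N = Σ_k |X_k|`).  Then `‖ρ − ⨂_k ρ_k‖₁ ≤ N f(R) d^{2N}`. -/
theorem factorization_from_correlation_bound
    {m d : ℕ} {c : Fin m → ℕ} (f : ℝ → ℝ) (R : ℝ)
    (ρ : Matrix ((k : Fin m) → Fin (d ^ c k)) ((k : Fin m) → Fin (d ^ c k)) ℂ)
    (ρk : (k : Fin m) → Matrix (Fin (d ^ c k)) (Fin (d ^ c k)) ℂ)
    (hρ : ρ.PosSemidef) (hρtr : ρ.trace = 1)
    (hρk : ∀ k, (ρk k).PosSemidef ∧ (ρk k).trace = 1)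
    (hmarg : ∀ (k : Fin m) (B : Matrix (Fin (d ^ c k)) (Fin (d ^ c k)) ℂ),
      (ρk k * B).trace =
        (ρ * kronPi (Function.update
          (fun l => (1 : Matrix (Fin (d ^ c l)) (Fin (d ^ c l)) ℂ)) k B)).trace)
    (hbound : ∀ A : (k : Fin m) → Matrix (Fin (d ^ c k)) (Fin (d ^ c k)) ℂ,
      ‖(ρ * kronPi A).trace - ∏ k, (ρk k * A k).trace‖
        ≤ f R * (∑ k, (c k : ℝ)) * ∏ k, opNorm (A k)) :
    traceNorm (ρ - kronPi ρk)
      ≤ (∑ k, (c k : ℝ)) * f R * (d : ℝ) ^ (2 * ∑ k, c k) :=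
  factorization_from_correlation_bound_general f R ρ ρk hρ hρk hbound
end
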